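/- In the Δ-setup, let I1 and I2 be committee positions with |I1 ∩ I2| = s and let x, y be positive integers. Then: (1) if C1 ≻ C2 at v(C1→I1,C2→I2) and y/x < Δ_{I1,I2}, then C2 ≻ C1 at the voting situation x·v(C1→I2,C2→I1) + y·v(C1→I1*,C2→I2*); and (2) if C2 ≻ C1 at v(C1→I1,C2→I2) and y/x > −Δ_{I1,I2}, then C2 ≻ C1 at the voting situation x·v(C1→I2,C2→I1) + y·v(C1→I2*,C2→I1*). -/

import Mathlib

open Finset

abbrev Vote (A : Type*) [Fintype A] := A ≃ Fin (Fintype.card A)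

structure DecisionRule (A : Type*) [Fintype A] [DecidableEq A] (k : ℕ) (R : Type*) where
  F : (Vote A → R) → {C : Finset A // C.card = k} → {C : Finset A // C.card = k} → ℤ
  antisymm : ∀ P C1 C2, F P C1 C2 = - F P C2 C1
  mem_range : ∀ P C1 C2, F P C1 C2 = -1 ∨ F P C1 C2 = 0 ∨ F P C1 C2 = 1

abbrev Committee (A : Type*) (k : ℕ) := {C : Finset A // C.card = k}

section Defs

variable {A : Type*} [Fintype A] [DecidableEq A] {k : ℕ}

/-- The set of positions occupied by the members of `C` in vote `π`. -/
def Vote.pos (π : Vote A) (C : Finset A) : Finset (Fin (Fintype.card A)) := C.image π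

/-- The action of a candidate permutation on a vote. -/
def permVote (σ : Equiv.Perm A) (π : Vote A) : Vote A := σ.symm.trans π

/-- The action of a candidate permutation on a voting situation. -/
def permSitu {R : Type*} (σ : Equiv.Perm A) (P : Vote A → R) : Vote A → R :=
  fun π => P (σ.trans π)

/-- The action of a candidate permutation on a committee. -/
def permComm (σ : Equiv.Perm A) (C : Committee A k) : Committee A k :=
  ⟨C.1.image σ, by rw [Finset.card_image_of_injective _ σ.injective]; exact C.2⟩

/-- Committee position `I` (weakly) dominates committee position `J`:
listing both increasingly, each element of `I` is at most the corresponding element of `J`. -/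
def Dominates {m : ℕ} (I J : Finset (Fin m)) : Prop :=
  List.Forall₂ (· ≤ ·) (I.sort (· ≤ ·)) (J.sort (· ≤ ·))

namespace DecisionRule

variable {R : Type*} [AddCommMonoid R]

def Neutral (f : DecisionRule A k R) : Prop :=
  ∀ (σ : Equiv.Perm A) (P : Vote A → R) (C1 C2 : Committee A k),
    f.F (permSitu σ P) (permComm σ C1) (permComm σ C2) = f.F P C1 C2

def Consistent (f : DecisionRule A k R) : Prop :=
  ∀ (P Q : Vote A → R) (C1 C2 : Committee A k),
    (f.F P C1 C2 = 1 → 0 ≤ f.F Q C1 C2 → f.F (P + Q) C1 C2 = 1) ∧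
    (0 ≤ f.F P C1 C2 → 0 ≤ f.F Q C1 C2 → 0 ≤ f.F (P + Q) C1 C2)

def IsContinuous (f : DecisionRule A k R) : Prop :=
  ∀ (P1 P2 : Vote A → R) (C1 C2 : Committee A k),
    f.F P2 C1 C2 = 1 → ∃ n : ℕ, f.F (P1 + n • P2) C1 C2 = 1

def Transitive (f : DecisionRule A k R) : Prop :=
  ∀ (P : Vote A → R) (C1 C2 C3 : Committee A k),
    0 ≤ f.F P C1 C2 → 0 ≤ f.F P C2 C3 → 0 ≤ f.F P C1 C3

end DecisionRule

def DecisionRule.CommitteeDominance {A : Type*} [Fintype A] [DecidableEq A] {k : ℕ}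
    {R : Type*} [CommSemiring R] [PartialOrder R] [IsOrderedRing R] (f : DecisionRule A k R) : Prop :=
  ∀ (P : Vote A → R) (C1 C2 : Committee A k), (∀ π, 0 ≤ P π) →
    (∀ π, 0 < P π → Dominates (π.pos C1.1) (π.pos C2.1)) → 0 ≤ f.F P C1 C2

/-- The `λ`-score of a committee `C` in an integer voting situation `P`. -/
noncomputable def scoreN (lam : Finset (Fin (Fintype.card A)) → ℝ) (C : Finset A)
    (P : Vote A → ℕ) : ℝ :=
  ∑ π : Vote A, (P π : ℝ) * lam (π.pos C)

end Defs

/-- The voting situation consisting of a single copy of the vote `π`. -/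
def singleSitu {A : Type*} [Fintype A] [DecidableEq A] (π : Vote A) : Vote A → ℕ :=
  fun u => if u = π then 1 else 0

/-- The value `Δ_{I1,I2}` of the Δ-setup, relative to a rule `f`, committees `C1, C2`,
a family `w` of distinguished votes (where `w J1 J2` places `C1` on positions `J1` and
`C2` on positions `J2`), and the reference positions `I1s, I2s`. -/
noncomputable def Delta {A : Type*} [Fintype A] [DecidableEq A] {k : ℕ}
    (f : DecisionRule A k ℕ) (C1 C2 : Committee A k)
    (w : Finset (Fin (Fintype.card A)) → Finset (Fin (Fintype.card A)) → Vote A)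
    (I1s I2s : Finset (Fin (Fintype.card A)))
    (I1 I2 : Finset (Fin (Fintype.card A))) : ℝ :=
  if f.F (singleSitu (w I1 I2)) C1 C2 = 1 then
    sSup {q : ℝ | ∃ x y : ℕ, 0 < x ∧ 0 < y ∧ q = (y : ℝ) / (x : ℝ) ∧
      f.F (x • singleSitu (w I2 I1) + y • singleSitu (w I1s I2s)) C2 C1 = 1}
  else if f.F (singleSitu (w I1 I2)) C1 C2 = -1 then
    - sInf {q : ℝ | ∃ x y : ℕ, 0 < x ∧ 0 < y ∧ q = (y : ℝ) / (x : ℝ) ∧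
      f.F (x • singleSitu (w I2 I1) + y • singleSitu (w I2s I1s)) C2 C1 = 1}
  else 0

/-
Comparing ratios reduces to consistency: to pass from weights `(x', y')` to `(x, y)` one
rewrites `x • (x' • u + y' • v)` (or its `x'`-multiple) as the other combination plus a
multiple of `v` favouring the appropriate side, and cancels the scalar. The supremum resp.
infimum defining `Δ` then provides a witness ratio beyond `y / x`, provided its set is nonempty
(`sSup ∅ = sInf ∅ = 0`). For the supremum this follows from `0 ≤ y / x`. In the second case the
reference vote `v(C1→I2*, C2→I1*)` favours `C2` by neutrality, applied to the permutation
exchanging the two committees' positions, and continuity makes the infimum's set nonempty.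
-/

lemma Real.exists_lt_of_nonneg_of_lt_sSup {s : Set ℝ} {a : ℝ} (ha : 0 ≤ a) (h : a < sSup s) :
    ∃ b ∈ s, a < b := by
  rcases s.eq_empty_or_nonempty with rfl | hs
  · rw [Real.sSup_empty] at h
    exact absurd h ha.not_gt
  · exact exists_lt_of_lt_csSup hs h

lemma Nat.cast_div_lt_cast_div_iff {x y x' y' : ℕ} (hx : 0 < x) (hx' : 0 < x') :
    (y : ℝ) / x < (y' : ℝ) / x' ↔ y * x' < y' * x := by
  rw [div_lt_div_iff₀ (by exact_mod_cast hx) (by exact_mod_cast hx')]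
  exact_mod_cast Iff.rfl

lemma smul_add_smul_add_smul_eq {M : Type*} [AddCommMonoid M] (u v : M) (x y x' y' d : ℕ)
    (hd : x * y' = x' * y + d) : x' • (x • u + y • v) + d • v = x • (x' • u + y' • v) := by
  match_scalars <;> linarith

namespace DecisionRule

variable {A : Type*} [Fintype A] [DecidableEq A] {k : ℕ} {R : Type*}
  {f : DecisionRule A k R} {P Q u v : Vote A → R} {C D : Committee A k}

lemma nonneg_swap_of_ne_one (h : f.F P C D ≠ 1) : 0 ≤ f.F P D C := by
  have := f.antisymm P D C
  rcases f.mem_range P C D with h' | h' | h' <;> omega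

namespace Consistent

variable [AddCommMonoid R] (hcons : f.Consistent)
include hcons

lemma nsmul_eq_one (h : f.F P C D = 1) {n : ℕ} (hn : 0 < n) : f.F (n • P) C D = 1 := by
  induction n, hn using Nat.le_induction with
  | base => simpa using h
  | succ n _ ih => rw [succ_nsmul']; exact (hcons P (n • P) C D).1 h (by omega)

lemma nsmul_nonneg (h : 0 ≤ f.F P C D) {n : ℕ} (hn : 0 < n) : 0 ≤ f.F (n • P) C D := by
  induction n, hn using Nat.le_induction with
  | base => simpa using h
  | succ n _ ih => rw [succ_nsmul']; exact (hcons P (n • P) C D).2 h ih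

lemma eq_one_of_nsmul_add {n : ℕ} (hn : 0 < n) (hQ : 0 ≤ f.F Q D C)
    (h : f.F (n • P + Q) C D = 1) : f.F P C D = 1 := by
  by_contra hP
  have := (hcons _ Q D C).2 (hcons.nsmul_nonneg (nonneg_swap_of_ne_one hP) hn) hQ
  have := f.antisymm (n • P + Q) C D
  omega

lemma eq_one_of_nsmul {n : ℕ} (hn : 0 < n) (h : f.F (n • P) C D = 1) : f.F P C D = 1 := by
  by_contra hP
  have := hcons.nsmul_nonneg (nonneg_swap_of_ne_one hP) hn
  have := f.antisymm (n • P) C D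
  omega

lemma eq_one_smul_add_of_ratio_lt {x y x' y' : ℕ} (hx : 0 < x) (hx' : 0 < x')
    (hv : f.F v C D = 1) (h' : f.F (x' • u + y' • v) D C = 1) (hlt : y * x' < y' * x) :
    f.F (x • u + y • v) D C = 1 := by
  obtain ⟨d, hd⟩ := Nat.exists_eq_add_of_lt hlt
  have hsplit := smul_add_smul_add_smul_eq u v x y x' y' (d + 1) (by linarith)
  refine hcons.eq_one_of_nsmul_add hx' (Q := (d + 1) • v) ?_ ?_
  · rw [hcons.nsmul_eq_one hv d.succ_pos]; exact zero_le_one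
  · rw [hsplit]; exact hcons.nsmul_eq_one h' hx

lemma eq_one_smul_add_of_ratio_gt {x y x' y' : ℕ} (hx : 0 < x) (hx' : 0 < x')
    (hv : f.F v D C = 1) (h' : f.F (x' • u + y' • v) D C = 1) (hlt : y' * x < y * x') :
    f.F (x • u + y • v) D C = 1 := by
  obtain ⟨d, hd⟩ := Nat.exists_eq_add_of_lt hlt
  have hsplit := smul_add_smul_add_smul_eq u v x' y' x y (d + 1) (by linarith)
  refine hcons.eq_one_of_nsmul hx' ?_
  rw [← hsplit]
  exact (hcons _ _ D C).1 (hcons.nsmul_eq_one h' hx)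
    (by rw [hcons.nsmul_eq_one hv d.succ_pos]; omega)

lemma exists_eq_one_add_nsmul (hcont : f.IsContinuous) (hv : f.F v C D = 1) (u : Vote A → R) :
    ∃ n : ℕ, 0 < n ∧ f.F (u + n • v) C D = 1 := by
  obtain ⟨n, hn⟩ := hcont u v C D hv
  refine ⟨n + 1, n.succ_pos, ?_⟩
  rw [succ_nsmul, ← add_assoc]
  exact (hcons _ _ C D).1 hn (by omega)

end Consistent

end DecisionRule

section Neutrality

variable {A : Type*} [Fintype A]

lemma permVote_trans_symm (π π' : Vote A) : permVote (π.trans π'.symm) π = π' := by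
  ext; simp [permVote]

variable [DecidableEq A] {k : ℕ}

lemma permSitu_singleSitu (σ : Equiv.Perm A) (π : Vote A) :
    permSitu σ (singleSitu π) = singleSitu (permVote σ π) := by
  funext ρ
  simp only [permSitu, singleSitu, permVote]
  refine if_congr ⟨?_, ?_⟩ rfl rfl
  · rintro rfl; ext; simp
  · rintro rfl; ext; simp

lemma permComm_trans_symm {π π' : Vote A} {C D : Committee A k} (h : π.pos C.1 = π'.pos D.1) :
    permComm (π.trans π'.symm) C = D := by
  apply Subtype.ext
  change C.1.image (π.trans π'.symm) = D.1
  rw [Equiv.coe_trans, ← Finset.image_image]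
  change (π.pos C.1).image π'.symm = D.1
  rw [h, Vote.pos, Finset.image_image]
  simp

lemma DecisionRule.Neutral.F_singleSitu_swap {f : DecisionRule A k ℕ} (hneu : f.Neutral)
    {π π' : Vote A} {C D : Committee A k} (hC : π.pos C.1 = π'.pos D.1)
    (hD : π.pos D.1 = π'.pos C.1) : f.F (singleSitu π') D C = f.F (singleSitu π) C D := by
  have := hneu (π.trans π'.symm) (singleSitu π) C D
  rwa [permSitu_singleSitu, permVote_trans_symm, permComm_trans_symm hC,
    permComm_trans_symm hD] at this

end Neutrality

theorem delta_threshold_general {A : Type*} [Fintype A] [DecidableEq A] {k s : ℕ}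
    (f : DecisionRule A k ℕ) (hneu : f.Neutral) (hcons : f.Consistent) (hcont : f.IsContinuous)
    (C1 C2 : Committee A k)
    (w : Finset (Fin (Fintype.card A)) → Finset (Fin (Fintype.card A)) → Vote A)
    (hw : ∀ J1 J2 : Finset (Fin (Fintype.card A)), J1.card = k → J2.card = k →
      (J1 ∩ J2).card = s → (w J1 J2).pos C1.1 = J1 ∧ (w J1 J2).pos C2.1 = J2)
    (I1s I2s : Finset (Fin (Fintype.card A)))
    (hI1s : I1s.card = k) (hI2s : I2s.card = k) (hIs : (I1s ∩ I2s).card = s)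
    (hstar : f.F (singleSitu (w I1s I2s)) C1 C2 = 1)
    (I1 I2 : Finset (Fin (Fintype.card A)))
    (x y : ℕ) (hx : 0 < x) :
    (f.F (singleSitu (w I1 I2)) C1 C2 = 1 →
      (y : ℝ) / (x : ℝ) < Delta f C1 C2 w I1s I2s I1 I2 →
      f.F (x • singleSitu (w I2 I1) + y • singleSitu (w I1s I2s)) C2 C1 = 1) ∧
    (f.F (singleSitu (w I1 I2)) C2 C1 = 1 →
      - Delta f C1 C2 w I1s I2s I1 I2 < (y : ℝ) / (x : ℝ) →
      f.F (x • singleSitu (w I2 I1) + y • singleSitu (w I2s I1s)) C2 C1 = 1) := by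
  refine ⟨fun h12 hlt => ?_, fun h21 hlt => ?_⟩
  · rw [Delta, if_pos h12] at hlt
    obtain ⟨_, ⟨x', y', hx', -, rfl, hwin⟩, hq⟩ :=
      Real.exists_lt_of_nonneg_of_lt_sSup (by positivity) hlt
    exact hcons.eq_one_smul_add_of_ratio_lt hx hx' hstar hwin
      ((Nat.cast_div_lt_cast_div_iff hx hx').1 hq)
  · have hswap : f.F (singleSitu (w I2s I1s)) C2 C1 = 1 := by
      obtain ⟨hpos1, hpos2⟩ := hw I1s I2s hI1s hI2s hIs
      obtain ⟨hpos1', hpos2'⟩ := hw I2s I1s hI2s hI1s (by rwa [Finset.inter_comm])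
      rw [hneu.F_singleSitu_swap (hpos1.trans hpos2'.symm) (hpos2.trans hpos1'.symm), hstar]
    have h12 : f.F (singleSitu (w I1 I2)) C1 C2 = -1 := by
      have := f.antisymm (singleSitu (w I1 I2)) C1 C2
      omega
    rw [Delta, if_neg (by omega), if_pos h12, neg_neg] at hlt
    obtain ⟨n, hn, hwin⟩ := hcons.exists_eq_one_add_nsmul hcont hswap (singleSitu (w I2 I1))
    obtain ⟨_, ⟨x', y', hx', -, rfl, hwin⟩, hq⟩ :=
      exists_lt_of_csInf_lt (by exact ⟨_, 1, n, one_pos, hn, rfl, by rwa [one_smul]⟩) hlt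
    exact hcons.eq_one_smul_add_of_ratio_gt hx hx' hswap hwin
      ((Nat.cast_div_lt_cast_div_iff hx' hx).1 hq)

/-- **Lemma 3.** In the Δ-setup, `Δ_{I1,I2}` is a threshold value: (1) if `C1 ≻ C2` at
`v(C1→I1,C2→I2)` and `y/x < Δ_{I1,I2}`, then `C2 ≻ C1` at
`x·v(C1→I2,C2→I1) + y·v(C1→I1*,C2→I2*)`; and (2) if `C2 ≻ C1` at `v(C1→I1,C2→I2)` and
`y/x > -Δ_{I1,I2}`, then `C2 ≻ C1` at `x·v(C1→I2,C2→I1) + y·v(C1→I2*,C2→I1*)`. -/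
theorem delta_threshold {A : Type*} [Fintype A] [DecidableEq A] {k s : ℕ}
    (hk : k ≤ Fintype.card A) (hs : s < k)
    (f : DecisionRule A k ℕ) (hneu : f.Neutral) (hcons : f.Consistent) (hcont : f.IsContinuous)
    (C1 C2 : Committee A k) (hC : (C1.1 ∩ C2.1).card = s)
    (w : Finset (Fin (Fintype.card A)) → Finset (Fin (Fintype.card A)) → Vote A)
    (hw : ∀ J1 J2 : Finset (Fin (Fintype.card A)), J1.card = k → J2.card = k →
      (J1 ∩ J2).card = s → (w J1 J2).pos C1.1 = J1 ∧ (w J1 J2).pos C2.1 = J2)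
    (I1s I2s : Finset (Fin (Fintype.card A)))
    (hI1s : I1s.card = k) (hI2s : I2s.card = k) (hIs : (I1s ∩ I2s).card = s)
    (hstar : f.F (singleSitu (w I1s I2s)) C1 C2 = 1)
    (I1 I2 : Finset (Fin (Fintype.card A)))
    (hI1 : I1.card = k) (hI2 : I2.card = k) (hI : (I1 ∩ I2).card = s)
    (x y : ℕ) (hx : 0 < x) (hy : 0 < y) :
    (f.F (singleSitu (w I1 I2)) C1 C2 = 1 →
      (y : ℝ) / (x : ℝ) < Delta f C1 C2 w I1s I2s I1 I2 →
      f.F (x • singleSitu (w I2 I1) + y • singleSitu (w I1s I2s)) C2 C1 = 1) ∧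
    (f.F (singleSitu (w I1 I2)) C2 C1 = 1 →
      - Delta f C1 C2 w I1s I2s I1 I2 < (y : ℝ) / (x : ℝ) →
      f.F (x • singleSitu (w I2 I1) + y • singleSitu (w I2s I1s)) C2 C1 = 1) :=
  delta_threshold_general f hneu hcons hcont C1 C2 w hw I1s I2s hI1s hI2s hIs hstar I1 I2 x y hx
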